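/- arXiv:2205.09551 — 2 statements merged into one kernel-verified Lean document; each statement's English description precedes it below -/
import Mathlib

section
/- For all x ≥ 0, the standard normal tail satisfies (1/(√(2π)(1+x))) · e^{-x²/2} ≤ 1 - Φ(x) ≤ (1/(√π·(1+x))) · e^{-x²/2}, where Φ is the standard normal CDF. -/
/-!
The tail integral `∫_x^∞ e^{-t²/2} dt` is compared with `e^{-x²/2} / (1 + x)`, whose negative
derivative is `e^{-t²/2} w(t)` with `w(t) = (t² + t + 1) / (1 + t)²`. For `t ≥ 0` one has
`w(t) ≤ 1`, and for every `t ≠ -1` one has `w(t) ≥ 3/4 ≥ 1/√2`; integrating these bounds over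
`(x, ∞)` and dividing by the total mass `√(2π)` gives the two inequalities.
-/

open Real MeasureTheory

noncomputable def stdNormalCDF (x : ℝ) : ℝ :=
  ∫ t in Set.Iic x, (Real.sqrt (2 * Real.pi))⁻¹ * Real.exp (-t ^ 2 / 2)

open Set Filter Topology

lemma integrable_exp_neg_sq_div_two : Integrable fun t : ℝ => exp (-t ^ 2 / 2) := by
  simpa [div_eq_inv_mul] using integrable_exp_neg_mul_sq (b := 1 / 2) (by norm_num)

lemma integral_exp_neg_sq_div_two : ∫ t : ℝ, exp (-t ^ 2 / 2) = √(2 * π) := by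
  have h := integral_gaussian (1 / 2)
  rw [show π / (1 / 2 : ℝ) = 2 * π by ring] at h
  simpa [div_eq_inv_mul] using h

lemma one_sub_stdNormalCDF (x : ℝ) :
    1 - stdNormalCDF x = (√(2 * π))⁻¹ * ∫ t in Ioi x, exp (-t ^ 2 / 2) := by
  have hsplit := intervalIntegral.integral_Iic_add_Ioi (b := x)
    integrable_exp_neg_sq_div_two.integrableOn integrable_exp_neg_sq_div_two.integrableOn
  rw [integral_exp_neg_sq_div_two] at hsplit
  have hpos : 0 < √(2 * π) := by positivity
  rw [stdNormalCDF, integral_const_mul, eq_inv_mul_iff_mul_eq₀ hpos.ne', mul_sub,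
    ← mul_assoc, mul_inv_cancel₀ hpos.ne']
  linarith

lemma hasDerivAt_neg_exp_neg_sq_div_two_div_one_add {t : ℝ} (ht : 1 + t ≠ 0) :
    HasDerivAt (fun s => -(exp (-s ^ 2 / 2) / (1 + s)))
      (exp (-t ^ 2 / 2) * ((t ^ 2 + t + 1) / (1 + t) ^ 2)) t := by
  have hexp : HasDerivAt (fun s : ℝ => exp (-s ^ 2 / 2)) (exp (-t ^ 2 / 2) * (-t)) t := by
    have hsq : HasDerivAt (fun s : ℝ => -s ^ 2 / 2) (-t) t := by
      simpa using ((hasDerivAt_pow 2 t).neg.div_const 2).congr_deriv (by push_cast; ring)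
    exact hsq.exp
  have hden : HasDerivAt (fun s : ℝ => 1 + s) 1 t := (hasDerivAt_id t).const_add 1
  refine (hexp.div hden ht).neg.congr_deriv ?_
  field_simp
  ring

lemma tendsto_neg_exp_neg_sq_div_two_div_one_add :
    Tendsto (fun t : ℝ => -(exp (-t ^ 2 / 2) / (1 + t))) atTop (𝓝 0) := by
  have hexp : Tendsto (fun t : ℝ => exp (-t ^ 2 / 2)) atTop (𝓝 0) :=
    tendsto_exp_atBot.comp <|
      (tendsto_neg_atBot_iff.mpr (tendsto_pow_atTop two_ne_zero)).atBot_div_const two_pos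
  have hinv : Tendsto (fun t : ℝ => (1 + t)⁻¹) atTop (𝓝 0) :=
    (tendsto_atTop_add_const_left _ 1 tendsto_id).inv_tendsto_atTop
  simpa [div_eq_mul_inv] using (hexp.mul hinv).neg

lemma exp_mul_div_one_add_sq_nonneg (t : ℝ) :
    0 ≤ exp (-t ^ 2 / 2) * ((t ^ 2 + t + 1) / (1 + t) ^ 2) := by
  have : 0 ≤ t ^ 2 + t + 1 := by nlinarith [sq_nonneg (t + 1 / 2)]
  positivity

lemma integrableOn_exp_mul_div_one_add_sq {x : ℝ} (hx : -1 < x) :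
    IntegrableOn (fun t => exp (-t ^ 2 / 2) * ((t ^ 2 + t + 1) / (1 + t) ^ 2)) (Ioi x) :=
  integrableOn_Ioi_deriv_of_nonneg'
    (fun _ ht => hasDerivAt_neg_exp_neg_sq_div_two_div_one_add (by linarith [mem_Ici.mp ht]))
    (fun t _ => exp_mul_div_one_add_sq_nonneg t) tendsto_neg_exp_neg_sq_div_two_div_one_add

lemma integral_Ioi_exp_mul_div_one_add_sq {x : ℝ} (hx : -1 < x) :
    ∫ t in Ioi x, exp (-t ^ 2 / 2) * ((t ^ 2 + t + 1) / (1 + t) ^ 2) =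
      exp (-x ^ 2 / 2) / (1 + x) := by
  rw [integral_Ioi_of_hasDerivAt_of_nonneg'
    (fun _ ht => hasDerivAt_neg_exp_neg_sq_div_two_div_one_add (by linarith [mem_Ici.mp ht]))
    (fun t _ => exp_mul_div_one_add_sq_nonneg t) tendsto_neg_exp_neg_sq_div_two_div_one_add]
  ring

lemma div_one_add_sq_le_one {t : ℝ} (ht : 0 ≤ t) : (t ^ 2 + t + 1) / (1 + t) ^ 2 ≤ 1 := by
  rw [div_le_one (by positivity)]
  nlinarith

lemma inv_sqrt_two_le_div_one_add_sq {t : ℝ} (ht : 1 + t ≠ 0) :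
    (√2)⁻¹ ≤ (t ^ 2 + t + 1) / (1 + t) ^ 2 := by
  have h34 : (√2)⁻¹ ≤ 3 / 4 := by
    rw [inv_le_comm₀ (by positivity) (by norm_num), Real.le_sqrt (by norm_num) (by norm_num)]
    norm_num
  have : 3 / 4 ≤ (t ^ 2 + t + 1) / (1 + t) ^ 2 := by
    rw [le_div_iff₀ (by positivity)]
    nlinarith [sq_nonneg (t - 1)]
  linarith

lemma exp_div_one_add_le_integral_Ioi {x : ℝ} (hx : 0 ≤ x) :
    exp (-x ^ 2 / 2) / (1 + x) ≤ ∫ t in Ioi x, exp (-t ^ 2 / 2) := by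
  rw [← integral_Ioi_exp_mul_div_one_add_sq (by linarith)]
  refine setIntegral_mono_on (integrableOn_exp_mul_div_one_add_sq (by linarith))
    integrable_exp_neg_sq_div_two.integrableOn measurableSet_Ioi fun t ht => ?_
  exact mul_le_of_le_one_right (exp_pos _).le (div_one_add_sq_le_one (hx.trans (le_of_lt ht)))

lemma integral_Ioi_le_sqrt_two_mul {x : ℝ} (hx : -1 < x) :
    ∫ t in Ioi x, exp (-t ^ 2 / 2) ≤ √2 * (exp (-x ^ 2 / 2) / (1 + x)) := by
  rw [← integral_Ioi_exp_mul_div_one_add_sq hx, ← integral_const_mul]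
  refine setIntegral_mono_on integrable_exp_neg_sq_div_two.integrableOn
    ((integrableOn_exp_mul_div_one_add_sq hx).const_mul _) measurableSet_Ioi fun t ht => ?_
  have hw := inv_sqrt_two_le_div_one_add_sq (t := t) (by linarith [mem_Ioi.mp ht])
  calc exp (-t ^ 2 / 2) = √2 * (exp (-t ^ 2 / 2) * (√2)⁻¹) := by field_simp
    _ ≤ √2 * (exp (-t ^ 2 / 2) * ((t ^ 2 + t + 1) / (1 + t) ^ 2)) := by gcongr

theorem stmt_0 (x : ℝ) (hx : 0 ≤ x) :
    (Real.sqrt (2 * Real.pi) * (1 + x))⁻¹ * Real.exp (-x ^ 2 / 2)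
      ≤ 1 - stdNormalCDF x ∧
    1 - stdNormalCDF x
      ≤ (Real.sqrt Real.pi * (1 + x))⁻¹ * Real.exp (-x ^ 2 / 2) := by
  rw [one_sub_stdNormalCDF]
  constructor
  · calc (√(2 * π) * (1 + x))⁻¹ * exp (-x ^ 2 / 2)
        = (√(2 * π))⁻¹ * (exp (-x ^ 2 / 2) / (1 + x)) := by rw [mul_inv]; ring
      _ ≤ _ := by gcongr; exact exp_div_one_add_le_integral_Ioi hx
  · calc (√(2 * π))⁻¹ * ∫ t in Ioi x, exp (-t ^ 2 / 2)
        ≤ (√(2 * π))⁻¹ * (√2 * (exp (-x ^ 2 / 2) / (1 + x))) := by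
          gcongr; exact integral_Ioi_le_sqrt_two_mul (by linarith)
      _ = (√π * (1 + x))⁻¹ * exp (-x ^ 2 / 2) := by
          rw [Real.sqrt_mul zero_le_two]
          field_simp
end

section
/- Let φ: (0,∞) → [0,1] be a nonincreasing function, and suppose there exist q ∈ (0,1), a positive random variable N with q·E[N^{-a₀}] < 1 for some a₀ > 0, and a constant B > 0 such that φ(t) ≤ q·E[φ(Nt)] + B·t^{-a₀} for all t > 0. Then there exists C > 0 such that φ(t) ≤ C/(1 + t^{a₀}) for all t > 0. -/
open Real MeasureTheory

theorem stmt_17 {Ω : Type*} [MeasurableSpace Ω] (μ : Measure Ω)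
    [IsProbabilityMeasure μ]
    (φ : ℝ → ℝ) (hφmeas : Measurable φ)
    (hφrange : ∀ t : ℝ, 0 < t → φ t ∈ Set.Icc (0 : ℝ) 1)
    (hφmono : AntitoneOn φ (Set.Ioi 0))
    (q : ℝ) (hq0 : 0 < q) (hq1 : q < 1)
    (N : Ω → ℝ) (hNmeas : Measurable N) (hNpos : ∀ ω, 0 < N ω)
    (a₀ : ℝ) (ha₀ : 0 < a₀)
    (hNint : Integrable (fun ω => (N ω) ^ (-a₀)) μ)
    (hcontr : q * ∫ ω, (N ω) ^ (-a₀) ∂μ < 1)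
    (B : ℝ) (hB : 0 < B)
    (hineq : ∀ t : ℝ, 0 < t →
      φ t ≤ q * (∫ ω, φ (N ω * t) ∂μ) + B * t ^ (-a₀)) :
    ∃ C > (0 : ℝ), ∀ t : ℝ, 0 < t → φ t ≤ C / (1 + t ^ a₀) := by
  set I := ∫ ω, (N ω) ^ (-a₀) ∂μ with hI
  have hI0 : 0 ≤ I := integral_nonneg fun ω => (rpow_pos_of_pos (hNpos ω) _).le
  set ρ := q * I with hρ
  have hρ0 : 0 ≤ ρ := mul_nonneg hq0.le hI0
  have hρ1 : ρ < 1 := hcontr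
  set A := B / (1 - ρ) with hA
  have hA0 : 0 < A := div_pos hB (by linarith)
  have hAeq : ρ * A + B = A := by
    have h2 : (1 : ℝ) - ρ ≠ 0 := by linarith
    have h1 : A * (1 - ρ) = B := div_mul_cancel₀ B h2
    nlinarith [h1]
  -- main induction
  have key : ∀ n : ℕ, ∀ t : ℝ, 0 < t → φ t ≤ q ^ n + A * t ^ (-a₀) := by
    intro n
    induction n with
    | zero =>
      intro t ht
      have := (hφrange t ht).2
      have : 0 < A * t ^ (-a₀) := mul_pos hA0 (rpow_pos_of_pos ht _)
      simp only [pow_zero]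
      linarith [(hφrange t ht).2]
    | succ n ih =>
      intro t ht
      have hint1 : Integrable (fun ω => φ (N ω * t)) μ := by
        refine ⟨(hφmeas.comp ((hNmeas.mul_const t))).aestronglyMeasurable, ?_⟩
        apply (hasFiniteIntegral_const (1 : ℝ)).mono'
        filter_upwards with ω
        have hNt : 0 < N ω * t := mul_pos (hNpos ω) ht
        have h1 := (hφrange _ hNt).1
        have h2 := (hφrange _ hNt).2
        rw [Real.norm_eq_abs, abs_of_nonneg h1]
        simpa using h2
      have hint2 : Integrable (fun ω => q ^ n + A * (N ω * t) ^ (-a₀)) μ := by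
        have : (fun ω => q ^ n + A * (N ω * t) ^ (-a₀)) =
            fun ω => q ^ n + (A * t ^ (-a₀)) * (N ω) ^ (-a₀) := by
          funext ω
          rw [Real.mul_rpow (hNpos ω).le ht.le]
          ring
        rw [this]
        exact (integrable_const _).add (hNint.const_mul _)
      have hle : ∫ ω, φ (N ω * t) ∂μ ≤ ∫ ω, q ^ n + A * (N ω * t) ^ (-a₀) ∂μ := by
        refine integral_mono hint1 hint2 fun ω => ?_
        exact ih _ (mul_pos (hNpos ω) ht)
      have hcalc : ∫ ω, q ^ n + A * (N ω * t) ^ (-a₀) ∂μ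
          = q ^ n + A * t ^ (-a₀) * I := by
        have heq : (fun ω => q ^ n + A * (N ω * t) ^ (-a₀)) =
            fun ω => q ^ n + (A * t ^ (-a₀)) * (N ω) ^ (-a₀) := by
          funext ω
          rw [Real.mul_rpow (hNpos ω).le ht.le]
          ring
        rw [heq, integral_add (integrable_const _) (hNint.const_mul _),
          integral_const, integral_const_mul]
        simp [hI]
      have h1 := hineq t ht
      have h2 : q * (∫ ω, φ (N ω * t) ∂μ) ≤ q * (q ^ n + A * t ^ (-a₀) * I) := by
        rw [← hcalc]
        exact mul_le_mul_of_nonneg_left hle hq0.le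
      have h3 : φ t ≤ q * (q ^ n + A * t ^ (-a₀) * I) + B * t ^ (-a₀) := by
        linarith
      calc φ t ≤ q * (q ^ n + A * t ^ (-a₀) * I) + B * t ^ (-a₀) := h3
        _ = q ^ (n + 1) + (ρ * A + B) * t ^ (-a₀) := by rw [hρ]; ring
        _ = q ^ (n + 1) + A * t ^ (-a₀) := by rw [hAeq]
  -- take limit n → ∞
  have hlim : ∀ t : ℝ, 0 < t → φ t ≤ A * t ^ (-a₀) := by
    intro t ht
    have htend : Filter.Tendsto (fun n : ℕ => q ^ n + A * t ^ (-a₀))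
        Filter.atTop (nhds (0 + A * t ^ (-a₀))) :=
      (tendsto_pow_atTop_nhds_zero_of_lt_one hq0.le hq1).add tendsto_const_nhds
    have := ge_of_tendsto' htend (fun n => key n t ht)
    linarith [this]
  refine ⟨2 * max 1 A, by positivity, fun t ht => ?_⟩
  have hta : 0 < t ^ a₀ := rpow_pos_of_pos ht _
  have hden : 0 < 1 + t ^ a₀ := by linarith
  rcases le_or_gt t 1 with h | h
  · have h1 : t ^ a₀ ≤ 1 := rpow_le_one ht.le h ha₀.le
    have : φ t ≤ 1 := (hφrange t ht).2
    rw [le_div_iff₀ hden]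
    have hmax : (1 : ℝ) ≤ max 1 A := le_max_left _ _
    nlinarith [(hφrange t ht).1]
  · have h1 : 1 ≤ t ^ a₀ := one_le_rpow h.le ha₀.le
    have h2 : φ t ≤ A * t ^ (-a₀) := hlim t ht
    have h3 : t ^ (-a₀) = (t ^ a₀)⁻¹ := by rw [rpow_neg ht.le]
    rw [le_div_iff₀ hden]
    have hmaxA : A ≤ max 1 A := le_max_right _ _
    have hmax1 : (1 : ℝ) ≤ max 1 A := le_max_left _ _
    have h4 : φ t * t ^ a₀ ≤ A := by
      rw [h3] at h2
      calc φ t * t ^ a₀ ≤ (A * (t ^ a₀)⁻¹) * t ^ a₀ :=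
            mul_le_mul_of_nonneg_right h2 hta.le
        _ = A := by field_simp
    nlinarith
end
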